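/- arXiv:1908.10153 — 6 statements merged into one kernel-verified Lean document; each statement's English description precedes it below -/
import Mathlib

section
/- Let G be a free group on generators a, b, c, and for each integer i let b_i = b^{c^i}. For each finitely supported function f : ℤ → ℤ define b_f as the product of the b_i^{f(i)} (in increasing order of i) and a_f = b_f^{-1} a b_f. Then the elements {a_f : f ∈ 𝓔} freely generate a free subgroup of G, where 𝓔 is the set of all finitely supported functions ℤ → ℤ. -/
namespace Stmt1

/-- The free group on three generators `a, b, c`. -/
abbrev G := FreeGroup (Fin 3)

def a : G := FreeGroup.of 0
def b : G := FreeGroup.of 1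
def c : G := FreeGroup.of 2

/-- `b_i = c^{-i} b c^i = b^{c^i}`. -/
def bi (i : ℤ) : G := c ^ (-i) * b * c ^ i

/-- For a finitely supported `f : ℤ → ℤ`, `b_f` is the product of the `b_i^{f(i)}`
in increasing order of `i`. -/
def bf (f : ℤ →₀ ℤ) : G := ((f.support.sort (· ≤ ·)).map fun i => bi i ^ f i).prod

/-- `a_f = b_f⁻¹ a b_f`. -/
def af (f : ℤ →₀ ℤ) : G := (bf f)⁻¹ * a * bf f

/-!
Map `G` to the semidirect product `F(L) ⋊ L`, where `L = ℤ ≀ ℤ` acts on the free group `F(L)`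
by right translation of its basis: `b` and `c` go to the lamp `δ₀` and the shift of `L`, and `a`
to the basis element indexed by `1 ∈ L`. Then `b_f` goes to `f ∈ ℤ ≀ ℤ`, so conjugating by it
sends the image of `a` to the basis element indexed by `f`. Distinct `f` give distinct basis
elements, which freely generate.
-/

open Function Multiplicative SemidirectProduct

section Conjugates

variable {K H ι : Type*} [Group K] [Group H]

variable (H) in
def freeGroupMulRightAut : H →* MulAut (FreeGroup H) where
  toFun h := FreeGroup.freeGroupCongr (Equiv.mulRight h⁻¹)
  map_one' := by
    ext
    simp
  map_mul' g h := by
    rw [MulAut.mul_def, FreeGroup.freeGroupCongr_trans]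
    congr 1
    ext
    simp [mul_assoc]

theorem freeGroupMulRightAut_symm_of (h w : H) :
    (freeGroupMulRightAut H h).symm (FreeGroup.of w) = FreeGroup.of (w * h) := by
  simp [freeGroupMulRightAut]

theorem injective_lift_conj (Ψ : K →* FreeGroup H ⋊[freeGroupMulRightAut H] H) {x : K}
    (hx : Ψ x = inl (FreeGroup.of 1)) {g : ι → K} {h : ι → H} (hh : Injective h)
    (hg : ∀ i, Ψ (g i) = inr (h i)) :
    Injective (FreeGroup.lift fun i => (g i)⁻¹ * x * g i) := by
  have hcomp : Ψ.comp (FreeGroup.lift fun i => (g i)⁻¹ * x * g i)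
      = inl.comp (FreeGroup.map h) := by
    refine FreeGroup.ext_hom _ _ fun i => ?_
    rw [MonoidHom.comp_apply, MonoidHom.comp_apply, FreeGroup.lift_apply_of, FreeGroup.map.of]
    calc Ψ ((g i)⁻¹ * x * g i) = inr (h i)⁻¹ * inl (FreeGroup.of 1) * inr (h i) := by
          simp only [map_mul, map_inv, hx, hg]
      _ = inl (FreeGroup.of (h i)) := by
          rw [← inl_aut_inv, MulAut.inv_apply, freeGroupMulRightAut_symm_of, one_mul]
  refine Injective.of_comp (f := Ψ) ?_
  rw [← MonoidHom.coe_comp, hcomp, MonoidHom.coe_comp]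
  exact inl_injective.comp (FreeGroup.map_injective hh)

end Conjugates

noncomputable def shiftAut : Multiplicative ℤ →* MulAut (Multiplicative (ℤ →₀ ℤ)) where
  toFun j := AddEquiv.toMultiplicative (Finsupp.domCongr (Equiv.subRight j.toAdd))
  map_one' := by
    ext
    simp
  map_mul' j k := by
    ext f m
    simp [add_assoc]

abbrev IntWrInt := Multiplicative (ℤ →₀ ℤ) ⋊[shiftAut] Multiplicative ℤ

theorem shiftAut_symm_single (j : Multiplicative ℤ) (m n : ℤ) :
    (shiftAut j).symm (ofAdd (Finsupp.single m n)) = ofAdd (Finsupp.single (m + j.toAdd) n) := by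
  simp [shiftAut]

theorem intWrInt_conj_single (i : ℤ) :
    (inr (ofAdd 1) ^ (-i) * inl (ofAdd (Finsupp.single 0 1)) * inr (ofAdd 1) ^ i : IntWrInt)
      = inl (ofAdd (Finsupp.single i 1)) := by
  have hpow (k : ℤ) : (inr (ofAdd 1) : IntWrInt) ^ k = inr (ofAdd k) := by
    rw [← map_zpow, ← ofAdd_zsmul, smul_eq_mul, mul_one]
  rw [hpow, hpow, ofAdd_neg, ← inl_aut_inv, MulAut.inv_apply, shiftAut_symm_single,
    toAdd_ofAdd, zero_add]

theorem map_bf {M : Type*} [Group M] (χ : G →* M) (ν : Multiplicative (ℤ →₀ ℤ) →* M)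
    (hχ : ∀ i, χ (bi i) = ν (ofAdd (Finsupp.single i 1))) (f : ℤ →₀ ℤ) :
    χ (bf f) = ν (ofAdd f) := by
  have hterm (i : ℤ) : χ (bi i ^ f i) = ν (ofAdd (Finsupp.single i (f i))) := by
    rw [map_zpow, hχ, ← map_zpow, ← ofAdd_zsmul, Finsupp.smul_single, smul_eq_mul, mul_one]
  calc χ (bf f)
        = ((f.support.sort (· ≤ ·)).map fun i => ν (ofAdd (Finsupp.single i (f i)))).prod := by
        rw [bf, map_list_prod, List.map_map]
        exact congrArg List.prod (List.map_congr_left fun i _ => hterm i)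
    _ = ν (ofAdd ((f.support.sort (· ≤ ·)).map fun i => Finsupp.single i (f i)).sum) := by
        rw [ofAdd_list_prod, map_list_prod, List.map_map, List.map_map]
        rfl
    _ = ν (ofAdd f) := by
        rw [← Multiset.sum_coe, ← Multiset.map_coe, Finset.sort_eq, ← Finset.sum_eq_multiset_sum]
        exact congrArg (fun v => ν (ofAdd v)) f.sum_single

noncomputable def semidirectRep :
    G →* FreeGroup IntWrInt ⋊[freeGroupMulRightAut IntWrInt] IntWrInt :=
  FreeGroup.lift
    ![inl (FreeGroup.of 1), inr (inl (ofAdd (Finsupp.single 0 1))), inr (inr (ofAdd 1))]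

theorem semidirectRep_a : semidirectRep a = inl (FreeGroup.of 1) := rfl

theorem semidirectRep_bi (i : ℤ) :
    semidirectRep (bi i) = inr (inl (ofAdd (Finsupp.single i 1))) := by
  have hb : semidirectRep b = inr (inl (ofAdd (Finsupp.single 0 1))) := by
    rw [semidirectRep, b, FreeGroup.lift_apply_of]
    rfl
  have hc : semidirectRep c = inr (inr (ofAdd 1)) := by
    rw [semidirectRep, c, FreeGroup.lift_apply_of]
    rfl
  rw [← intWrInt_conj_single, bi]
  simp only [map_mul, map_zpow, hb, hc]

theorem semidirectRep_bf (f : ℤ →₀ ℤ) : semidirectRep (bf f) = inr (inl (ofAdd f)) :=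
  map_bf semidirectRep (inr.comp inl) semidirectRep_bi f

/-- The family `{a_f : f ∈ 𝓔}` (with `𝓔` the finitely supported functions `ℤ → ℤ`)
freely generates a free subgroup of `G`: the canonical homomorphism from the free
group on `𝓔` sending the generator `f` to `a_f` is injective. -/
theorem af_freely_generates :
    Function.Injective ((FreeGroup.lift af : FreeGroup (ℤ →₀ ℤ) →* G)) :=
  injective_lift_conj semidirectRep semidirectRep_a (inl_injective.comp ofAdd.injective)
    semidirectRep_bf

end Stmt1
end

section
/- Define 𝒵 = {zero function} ⊆ 𝓔, and the Higman operations ζ(𝒜) = {f : ∃ g ∈ 𝒜, ∀ i ≠ 0, f(i) = g(i)} and σ(𝒜) = {f : ∃ g ∈ 𝒜, ∀ i, f(i) = g(i-1)}. Then ζ((σ∘ζ)²(𝒵)) equals 𝓔₃ = {f ∈ 𝓔 : f(i) = 0 for all i < 0 and all i ≥ 3}. -/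
namespace Stmt5

abbrev E := ℤ →₀ ℤ

/-- `𝒵` contains only the zero function. -/
def Z : Set E := {0}

/-- The Higman operation `ζ`. -/
def zeta (A : Set E) : Set E := {f | ∃ g ∈ A, ∀ i : ℤ, i ≠ 0 → f i = g i}

/-- The Higman operation `σ`. -/
def sigma (A : Set E) : Set E := {f | ∃ g ∈ A, ∀ i : ℤ, f i = g (i - 1)}

/-- `𝓔₃` is the set of functions supported on `{0, 1, 2}`. -/
def E3 : Set E := {f | ∀ i : ℤ, i < 0 ∨ 3 ≤ i → f i = 0}

/-- `ζ((σ∘ζ)²(𝒵)) = 𝓔₃`. -/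
theorem zeta_sigmazeta_sq_Z : zeta ((sigma ∘ zeta) ((sigma ∘ zeta) Z)) = E3 := by
  ext f
  simp only [zeta, sigma, Z, Function.comp, Set.mem_setOf_eq, Set.mem_singleton_iff, E3]
  constructor
  · rintro ⟨g1, ⟨g2, ⟨g3, ⟨g4, ⟨g5, rfl, p5⟩, p4⟩, p3⟩, p2⟩, p1⟩
    intro i hi
    rw [p1 i (by omega), p2 i, p3 (i - 1) (by omega), p4 (i - 1),
      p5 (i - 1 - 1) (by omega)]
    rfl
  · intro hf
    refine ⟨Finsupp.single 1 (f 1) + Finsupp.single 2 (f 2),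
      ⟨Finsupp.single 0 (f 1) + Finsupp.single 1 (f 2),
        ⟨Finsupp.single 1 (f 2),
          ⟨Finsupp.single 0 (f 2), ⟨0, rfl, ?_⟩, ?_⟩, ?_⟩, ?_⟩, ?_⟩
    · intro i hi
      rw [Finsupp.single_apply, if_neg (Ne.symm hi)]
      rfl
    · intro i
      simp only [Finsupp.single_apply]
      rcases eq_or_ne i 1 with rfl | h
      · simp
      · rw [if_neg (by omega), if_neg (by omega)]
    · intro i hi
      simp only [Finsupp.add_apply, Finsupp.single_apply]
      rw [if_neg (by omega)]
      simp
    · intro i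
      simp only [Finsupp.add_apply, Finsupp.single_apply]
      rcases eq_or_ne i 1 with rfl | h1
      · norm_num
      rcases eq_or_ne i 2 with rfl | h2
      · norm_num
      · rw [if_neg (by omega), if_neg (by omega), if_neg (by omega),
          if_neg (by omega)]
    · intro i hi
      simp only [Finsupp.add_apply, Finsupp.single_apply]
      rcases eq_or_ne i 1 with rfl | h1
      · simp
      rcases eq_or_ne i 2 with rfl | h2
      · simp
      · rw [hf i (by omega), if_neg (by omega), if_neg (by omega)]
        simp

end Stmt5
end

section
/- Let Γ = G *_φ H be a free product with amalgamation, amalgamating A ≤ G with B ≤ H via the isomorphism φ : A → B. Suppose G' ≤ G and H' ≤ H satisfy φ(G' ∩ A) = H' ∩ B. Then the subgroup Γ' = ⟨G', H'⟩ of Γ is the free product of G' and H' amalgamated over G' ∩ A and H' ∩ B via the restriction of φ; moreover Γ' ∩ G = G', Γ' ∩ H = H', Γ' ∩ A = G' ∩ A, and Γ' ∩ B = H' ∩ B. -/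
/-!
The inclusions `G' → G`, `H' → H` and `G' ∩ A → A` form a morphism of amalgamation diagrams,
so they induce a homomorphism `e : G' *_{G' ∩ A} H' → Γ` whose image is `⟨G', H'⟩`.
The hypothesis `φ(G' ∩ A) = H' ∩ B` says that an element of `G'` (resp. `H'`) lies in `A`
(resp. `B`) only if it lies in `G' ∩ A` (resp. `H' ∩ B`), so `e` maps reduced words to reduced
words. By the normal form theorem a nonempty reduced word does not represent an element of the
amalgamated subgroup, which makes `e` injective; and the sequence of factors of a reduced word is
determined by the element it represents, so an element of `G` in the image of `e` is represented
by a word with at most one letter, which comes from `G'`. This gives `Γ' ∩ G = G'`, and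
symmetrically `Γ' ∩ H = H'`.
-/

namespace Stmt9

open Monoid

universe u

def fam (GG HH : Type u) : Bool → Type _ := fun i => cond i GG HH

instance (GG HH : Type u) [Group GG] [Group HH] (i : Bool) : Group (fam GG HH i) := by
  cases i
  · exact inferInstanceAs (Group HH)
  · exact inferInstanceAs (Group GG)

/-- The amalgamation maps `A → GG` (inclusion) and `A → HH` (via `φ : A ≃* B`),
so that `PushoutI (amalgMaps A B φ)` is the amalgamated free product `GG *_φ HH`. -/
def amalgMaps {GG HH : Type u} [Group GG] [Group HH] (A : Subgroup GG) (B : Subgroup HH)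
    (φ : A ≃* B) : ∀ i : Bool, ↥A →* fam GG HH i := fun i =>
  match i with
  | true => A.subtype
  | false => B.subtype.comp φ.toMonoidHom

/-- The corresponding maps for the restricted data: `A' = G' ∩ A` includes into `G'`,
and maps into `H'` via (a restriction `ψH` of) `φ`. -/
def restMaps {GG HH : Type u} [Group GG] [Group HH] (G' : Subgroup GG) (H' : Subgroup HH)
    (A' : Subgroup ↥G') (ψH : ↥A' →* ↥H') : ∀ i : Bool, ↥A' →* fam ↥G' ↥H' i := fun i =>
  match i with
  | true => A'.subtype
  | false => ψH

end Stmt9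

open Function

namespace Monoid

namespace CoprodI.Word

variable {ι : Type*} {M N : ι → Type*} [∀ i, Monoid (M i)] [∀ i, Monoid (N i)]

def map (f : ∀ i, M i →* N i) (hf : ∀ i, Injective (f i)) (w : Word M) : Word N where
  toList := w.toList.map fun l => ⟨l.1, f l.1 l.2⟩
  ne_one := by
    simp only [List.mem_map]
    rintro _ ⟨l, hl, rfl⟩ h
    exact w.ne_one l hl (hf l.1 (h.trans (map_one _).symm))
  chain_ne := List.isChain_map _ |>.2 w.chain_ne

@[simp]
theorem map_toList (f : ∀ i, M i →* N i) (hf : ∀ i, Injective (f i)) (w : Word M) :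
    (w.map f hf).toList = w.toList.map fun l => ⟨l.1, f l.1 l.2⟩ := rfl

end CoprodI.Word

namespace PushoutI

open CoprodI NormalWord

variable {ι : Type*} {G : ι → Type*} {H : Type*} [∀ i, Group (G i)] [Group H]
  {φ : ∀ i, H →* G i}

theorem NormalWord.reduced_toWord {d : Transversal φ} (w : NormalWord d) :
    Reduced φ w.toWord := by
  rintro l hl ⟨h, hh⟩
  -- `l.2` lies both in the transversal and in the base subgroup, so it is `1`.
  have hset : l.2 ∈ d.set l.1 := w.normalized l.1 l.2 hl
  have := (d.compl l.1).equiv_snd_eq_self_of_mem_of_one_mem (one_mem _) hset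
  rw [(d.compl l.1).equiv_snd_eq_one_of_mem_of_one_mem (d.one_mem l.1) ⟨h, hh⟩] at this
  exact w.ne_one l hl (congrArg Subtype.val this).symm

theorem exists_reduced_base_mul_eq (hφ : ∀ i, Injective (φ i)) (x : PushoutI φ) :
    ∃ (h : H) (w : Word G), Reduced φ w ∧ base φ h * ofCoprodI w.prod = x := by
  classical
  obtain ⟨d⟩ := transversal_nonempty φ hφ
  let w := NormalWord.equiv (d := d) x
  exact ⟨w.head, w.toWord, w.reduced_toWord, (NormalWord.equiv (d := d)).symm_apply_apply x⟩

theorem Reduced.map_fst_eq_of_prod_eq (hφ : ∀ i, Injective (φ i)) {w₁ w₂ : Word G}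
    (h₁ : Reduced φ w₁) (h₂ : Reduced φ w₂) (h : H)
    (heq : ofCoprodI w₁.prod = base φ h * ofCoprodI w₂.prod) :
    w₁.toList.map Sigma.fst = w₂.toList.map Sigma.fst := by
  classical
  obtain ⟨d⟩ := transversal_nonempty φ hφ
  obtain ⟨n₁, hprod₁, hfst₁⟩ := h₁.exists_normalWord_prod_eq d
  obtain ⟨n₂, hprod₂, hfst₂⟩ := h₂.exists_normalWord_prod_eq d
  have hn : n₁ = h • n₂ := prod_injective (by rw [prod_base_smul, hprod₁, hprod₂, heq])
  rw [← hfst₁, ← hfst₂, hn]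
  rfl

theorem Reduced.toList_eq_of_prod_eq_of (hφ : ∀ i, Injective (φ i)) {w : Word G}
    (hw : Reduced φ w) {i : ι} {g : G i} (hg : g ∉ (φ i).range)
    (heq : ofCoprodI w.prod = of (φ := φ) i g) : w.toList = [⟨i, g⟩] := by
  have hg1 : g ≠ 1 := fun h => hg (h ▸ one_mem _)
  let s : Word G := ⟨[⟨i, g⟩], by simpa using hg1, List.isChain_singleton _⟩
  have hs : Reduced φ s := by simpa [Reduced, s] using hg
  have hfst := hs.map_fst_eq_of_prod_eq hφ hw 1 (by
    rw [map_one, one_mul, heq]; simp [s, Word.prod])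
  obtain ⟨⟨i', g'⟩, hl, rfl⟩ := List.map_eq_singleton_iff.1 hfst.symm
  have hg' : of (φ := φ) i' g' = of i' g := by
    rw [← heq]; simp [Word.prod, hl]
  rw [hl, of_injective hφ i' hg']

variable {G' : ι → Type*} {K : Type*} [∀ i, Group (G' i)] [Group K] {ψ : ∀ i, K →* G' i}
  (j : ∀ i, G' i →* G i) (ρ : K →* H) (hcomm : ∀ i, (j i).comp (ψ i) = (φ i).comp ρ)

def map : PushoutI ψ →* PushoutI φ :=
  lift (fun i => (of i).comp (j i)) ((base φ).comp ρ) fun i => by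
    rw [MonoidHom.comp_assoc, hcomm, ← MonoidHom.comp_assoc, of_comp_eq_base]

@[simp]
theorem map_of (i : ι) (g : G' i) : map j ρ hcomm (of i g) = of i (j i g) :=
  lift_of _ _ _ g

@[simp]
theorem map_base (k : K) : map j ρ hcomm (base ψ k) = base φ (ρ k) :=
  lift_base _ _ _ k

theorem map_ofCoprodI_prod (hj : ∀ i, Injective (j i)) (w : Word G') :
    map j ρ hcomm (ofCoprodI w.prod) = ofCoprodI (w.map j hj).prod := by
  simp [Word.prod, map_list_prod, Function.comp_def]

theorem range_map [Nonempty ι] :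
    (map j ρ hcomm).range = ⨆ i, (j i).range.map (of i) := by
  refine le_antisymm ?_ (iSup_le fun i => ?_)
  · rintro _ ⟨x, rfl⟩
    induction x using PushoutI.induction_on with
    | of i g => exact Subgroup.mem_iSup_of_mem i ⟨j i g, ⟨g, rfl⟩, (map_of j ρ hcomm i g).symm⟩
    | base k =>
      obtain ⟨i⟩ := ‹Nonempty ι›
      refine Subgroup.mem_iSup_of_mem i ⟨j i (ψ i k), ⟨_, rfl⟩, ?_⟩
      rw [map_base, ← of_apply_eq_base φ i, ← MonoidHom.comp_apply (φ i) ρ, ← hcomm]; rfl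
    | mul x y hx hy => rw [map_mul]; exact mul_mem hx hy
  · rintro _ ⟨_, ⟨g, rfl⟩, rfl⟩
    exact ⟨of i g, map_of j ρ hcomm i g⟩

variable {j ρ}

theorem Reduced.map (hj : ∀ i, Injective (j i))
    (hsat : ∀ i, (φ i).range.comap (j i) ≤ (ψ i).range) {w : Word G'} (hw : Reduced ψ w) :
    Reduced φ (w.map j hj) := by
  rintro _ hmem hrange
  obtain ⟨l, hl, rfl⟩ := List.mem_map.1 hmem
  exact hw l hl (hsat _ hrange)

theorem injective_of_comp_eq_comp (hcomm : ∀ i, (j i).comp (ψ i) = (φ i).comp ρ)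
    (hφ : ∀ i, Injective (φ i)) (hρ : Injective ρ) (i : ι) : Injective (ψ i) := by
  refine Injective.of_comp (f := j i) ?_
  rw [← MonoidHom.coe_comp, hcomm, MonoidHom.coe_comp]
  exact (hφ i).comp hρ

variable {hcomm}

theorem map_injective (hφ : ∀ i, Injective (φ i)) (hj : ∀ i, Injective (j i))
    (hρ : Injective ρ) (hsat : ∀ i, (φ i).range.comap (j i) ≤ (ψ i).range) :
    Injective (map j ρ hcomm) := by
  rw [injective_iff_map_eq_one]
  intro x hx
  obtain ⟨k, w, hw, rfl⟩ := exists_reduced_base_mul_eq (injective_of_comp_eq_comp hcomm hφ hρ) x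
  rw [map_mul, map_base, map_ofCoprodI_prod j ρ hcomm hj] at hx
  have hw' : w.map j hj = Word.empty := (hw.map hj hsat).eq_empty_of_mem_range hφ
    ⟨(ρ k)⁻¹, by rw [map_inv, eq_inv_of_mul_eq_one_right hx]⟩
  have hw1 : w = Word.empty := Word.ext (by simpa using congrArg Word.toList hw')
  rw [hw', Word.prod_empty, map_one, mul_one, ← map_one (base φ)] at hx
  have hk : k = 1 := hρ (base_injective hφ hx |>.trans (map_one ρ).symm)
  simp [hw1, hk]

theorem comap_of_range_map (hφ : ∀ i, Injective (φ i)) (hj : ∀ i, Injective (j i))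
    (hρ : Injective ρ) (hsat : ∀ i, (φ i).range.comap (j i) ≤ (ψ i).range) (i : ι) :
    (map j ρ hcomm).range.comap (of i) = (j i).range := by
  refine le_antisymm ?_ ?_
  · rintro g ⟨x, hx⟩
    obtain ⟨k, w, hw, rfl⟩ := exists_reduced_base_mul_eq (injective_of_comp_eq_comp hcomm hφ hρ) x
    rw [map_mul, map_base, map_ofCoprodI_prod j ρ hcomm hj] at hx
    set g' := φ i (ρ k)⁻¹ * g
    have hg' : ofCoprodI (w.map j hj).prod = of (φ := φ) i g' := by
      rw [map_mul, of_apply_eq_base, ← hx, map_inv, inv_mul_cancel_left]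
    suffices g' ∈ (j i).range by
      have hk : φ i (ρ k) ∈ (j i).range := ⟨ψ i k, DFunLike.congr_fun (hcomm i) k⟩
      simpa [g'] using mul_mem hk this
    by_cases hg'φ : g' ∈ (φ i).range
    · obtain ⟨a, ha⟩ := hg'φ
      have := (hw.map hj hsat).eq_empty_of_mem_range hφ ⟨a, by rw [hg', ← ha, of_apply_eq_base]⟩
      rw [this, Word.prod_empty, map_one, eq_comm, ← map_one (of i)] at hg'
      rw [of_injective hφ i hg']
      exact one_mem _
    · have hl := (hw.map hj hsat).toList_eq_of_prod_eq_of hφ hg'φ hg'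
      obtain ⟨⟨i', h⟩, -, hh⟩ := List.map_eq_singleton_iff.1 hl
      obtain ⟨rfl, hh⟩ := Sigma.mk.inj_iff.1 hh
      exact ⟨h, eq_of_heq hh⟩
  · rintro _ ⟨g, rfl⟩
    exact ⟨of i g, map_of j ρ hcomm i g⟩

end PushoutI

end Monoid

namespace Stmt9

open Monoid Function

universe u

variable {GG HH : Type u} [Group GG] [Group HH]

def famSubtype (G' : Subgroup GG) (H' : Subgroup HH) : ∀ i, fam ↥G' ↥H' i →* fam GG HH i
  | true => G'.subtype
  | false => H'.subtype

theorem famSubtype_injective (G' : Subgroup GG) (H' : Subgroup HH) :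
    ∀ i, Injective (famSubtype G' H' i)
  | true => Subtype.val_injective
  | false => Subtype.val_injective

theorem amalgMaps_injective (A : Subgroup GG) (B : Subgroup HH) (φ : ↥A ≃* ↥B) :
    ∀ i, Injective (amalgMaps A B φ i)
  | true => Subtype.val_injective
  | false => Subtype.val_injective.comp φ.injective

theorem subgroupComap_subtype_injective (G' A : Subgroup GG) :
    Injective (G'.subtype.subgroupComap A) :=
  fun _ _ h => Subtype.ext (Subtype.ext (congrArg (fun a : ↥A => (a : GG)) h))

section Restriction

variable {A : Subgroup GG} {B : Subgroup HH} {φ : ↥A ≃* ↥B} {G' : Subgroup GG} {H' : Subgroup HH}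
  {ψH : ↥(A.comap G'.subtype) →* ↥H'}

theorem famSubtype_comp_restMaps
    (hψH : ∀ x : ↥(A.comap G'.subtype),
      ((ψH x : ↥H') : HH) = ((φ ⟨((x : ↥G') : GG), x.2⟩ : ↥B) : HH)) :
    ∀ i, (famSubtype G' H' i).comp (restMaps G' H' (A.comap G'.subtype) ψH i) =
      (amalgMaps A B φ i).comp (G'.subtype.subgroupComap A)
  | true => rfl
  | false => MonoidHom.ext hψH

theorem comap_range_amalgMaps_le
    (hGH : ∀ a : ↥A, (a : GG) ∈ G' ↔ ((φ a : ↥B) : HH) ∈ H')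
    (hψH : ∀ x : ↥(A.comap G'.subtype),
      ((ψH x : ↥H') : HH) = ((φ ⟨((x : ↥G') : GG), x.2⟩ : ↥B) : HH)) :
    ∀ i, (amalgMaps A B φ i).range.comap (famSubtype G' H' i) ≤
      (restMaps G' H' (A.comap G'.subtype) ψH i).range
  | true, (g : ↥G'), ⟨a, ha⟩ => by
    have ha : (a : GG) = g := ha
    exact ⟨⟨g, show (g : GG) ∈ A from ha ▸ a.2⟩, rfl⟩
  | false, (h : ↥H'), ⟨a, ha⟩ => by
    have ha : ((φ a : ↥B) : HH) = h := ha
    refine ⟨⟨⟨a, (hGH a).2 (ha ▸ h.2)⟩, show (a : GG) ∈ A from a.2⟩, Subtype.ext ?_⟩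
    exact (hψH _).trans ha

end Restriction

/-- Lemma on subgroups of an amalgamated free product `Γ = GG *_φ HH` (amalgamating
`A ≤ GG` with `B ≤ HH` via `φ`): if `G' ≤ GG`, `H' ≤ HH` satisfy `φ(G' ∩ A) = H' ∩ B`,
then `Γ' = ⟨G', H'⟩` is the amalgamated product of `G'` and `H'` over `G' ∩ A` and
`H' ∩ B` via the restriction of `φ` (there is an injective homomorphism from that
amalgamated product onto `Γ'` compatible with the inclusions), and moreover
`Γ' ∩ GG = G'`, `Γ' ∩ HH = H'`, `Γ' ∩ A = G' ∩ A`, `Γ' ∩ B = H' ∩ B`. -/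
theorem subgroups_in_amalgamated_product
    {GG HH : Type u} [Group GG] [Group HH]
    (A : Subgroup GG) (B : Subgroup HH) (φ : ↥A ≃* ↥B)
    (G' : Subgroup GG) (H' : Subgroup HH)
    -- `φ(G' ∩ A) = H' ∩ B`:
    (hGH : ∀ a : ↥A, (a : GG) ∈ G' ↔ ((φ a : ↥B) : HH) ∈ H')
    -- `ψH` is the restriction of `φ` to `A' = G' ∩ A`, mapping into `H'`:
    (ψH : ↥(A.comap G'.subtype) →* ↥H')
    (hψH : ∀ x : ↥(A.comap G'.subtype),
      ((ψH x : ↥H') : HH) = ((φ ⟨((x : ↥G') : GG), x.2⟩ : ↥B) : HH)) :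
    ∀ Γ' : Subgroup (PushoutI (amalgMaps A B φ)),
      Γ' = (G'.map (PushoutI.of (φ := amalgMaps A B φ) true)) ⊔
           (H'.map (PushoutI.of (φ := amalgMaps A B φ) false)) →
      -- (1) `Γ' = G' *_{φ'} H'`:
      (∃ e : PushoutI (restMaps G' H' (A.comap G'.subtype) ψH) →*
          PushoutI (amalgMaps A B φ),
        Function.Injective e ∧ e.range = Γ' ∧
        (∀ g : ↥G', e (PushoutI.of (φ := restMaps G' H' (A.comap G'.subtype) ψH) true g)
            = PushoutI.of (φ := amalgMaps A B φ) true (g : GG)) ∧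
        (∀ h : ↥H', e (PushoutI.of (φ := restMaps G' H' (A.comap G'.subtype) ψH) false h)
            = PushoutI.of (φ := amalgMaps A B φ) false (h : HH))) ∧
      -- (3) `Γ' ∩ GG = G'` and `Γ' ∩ HH = H'`:
      Γ'.comap (PushoutI.of (φ := amalgMaps A B φ) true) = G' ∧
      Γ'.comap (PushoutI.of (φ := amalgMaps A B φ) false) = H' ∧
      -- (2) `Γ' ∩ A = G' ∩ A` and `Γ' ∩ B = H' ∩ B`:
      (∀ a : ↥A, PushoutI.of (φ := amalgMaps A B φ) true (a : GG) ∈ Γ' ↔ (a : GG) ∈ G') ∧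
      (∀ b : ↥B, PushoutI.of (φ := amalgMaps A B φ) false (b : HH) ∈ Γ' ↔ (b : HH) ∈ H') := by
  rintro Γ' rfl
  have hcomm := famSubtype_comp_restMaps hψH
  have hφ := amalgMaps_injective A B φ
  have hj := famSubtype_injective G' H'
  have hρ := subgroupComap_subtype_injective G' A
  have hsat := comap_range_amalgMaps_le hGH hψH
  let e := PushoutI.map (famSubtype G' H') (G'.subtype.subgroupComap A) hcomm
  have hrange : e.range = G'.map (PushoutI.of (φ := amalgMaps A B φ) true) ⊔
      H'.map (PushoutI.of (φ := amalgMaps A B φ) false) := by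
    rw [PushoutI.range_map, iSup_bool_eq]
    congr 1 <;> exact congrArg _ (Subgroup.range_subtype _)
  have hcomap (i : Bool) : e.range.comap (PushoutI.of i) = (famSubtype G' H' i).range :=
    PushoutI.comap_of_range_map hφ hj hρ hsat i
  have hG : e.range.comap (PushoutI.of true) = G' := (hcomap true).trans G'.range_subtype
  have hH : e.range.comap (PushoutI.of false) = H' := (hcomap false).trans H'.range_subtype
  rw [← hrange]
  refine ⟨⟨e, PushoutI.map_injective hφ hj hρ hsat, rfl, fun g => PushoutI.map_of _ _ hcomm true g,
    fun h => PushoutI.map_of _ _ hcomm false h⟩, hG, hH, fun a => ?_, fun b => ?_⟩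
  · exact SetLike.ext_iff.1 hG (show fam GG HH true from (a : GG))
  · exact SetLike.ext_iff.1 hH (show fam GG HH false from (b : HH))

end Stmt9
end

section
/- Let Γ = G *_φ t be the HNN-extension of G by a stable letter t with respect to an isomorphism φ : A → B between subgroups A, B ≤ G. Suppose G' ≤ G satisfies φ(G' ∩ A) = G' ∩ B. Then the subgroup Γ' = ⟨G', t⟩ is the HNN-extension of G' by t with respect to the restriction of φ to G' ∩ A; moreover Γ' ∩ G = G', Γ' ∩ A = G' ∩ A, and Γ' ∩ B = G' ∩ B. -/
/-!
The inclusion `G' ≤ G` induces a homomorphism `G' *_ψ t → G *_φ t` with image `⟨G', t⟩`.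
It maps reduced words to reduced words, since an element of `G'` lying in `A` (or `B`) lies in
`G' ∩ A` (or `G' ∩ B`). By Britton's lemma, the image of a reduced word containing `t` then lies
outside `G`; so only elements of `G'` map into `G`, which gives both injectivity and
`⟨G', t⟩ ∩ G = G'`.
-/

namespace HNNExtension

open NormalWord

variable {G H : Type*} [Group G] [Group H] {A B : Subgroup G} {φ : A ≃* B} (f : H →* G)

theorem toSubgroup_comap (u : ℤˣ) :
    toSubgroup (A.comap f) (B.comap f) u = (toSubgroup A B u).comap f := by
  rcases Int.units_eq_one_or u with rfl | rfl <;> rfl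

theorem NormalWord.ReducedWord.exists_prod_eq (x : HNNExtension G A B φ) :
    ∃ w : ReducedWord G A B, w.prod φ = x := by
  obtain ⟨d⟩ := TransversalPair.nonempty G A B
  exact ⟨(NormalWord.equiv φ d x).toReducedWord, (NormalWord.equiv φ d).symm_apply_apply x⟩

def NormalWord.ReducedWord.map (w : ReducedWord H (A.comap f) (B.comap f)) :
    ReducedWord G A B where
  head := f w.head
  toList := w.toList.map (Prod.map id f)
  chain := by
    rw [List.isChain_map]
    refine w.chain.imp fun p q hpq hp => hpq ?_
    rwa [toSubgroup_comap]

variable (ψ : A.comap f ≃* B.comap f) (hψ : ∀ a : A.comap f, f (ψ a) = φ ⟨f a, a.2⟩)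

def map : HNNExtension H (A.comap f) (B.comap f) ψ →* HNNExtension G A B φ :=
  lift (of.comp f) t fun a => by
    simpa only [MonoidHom.comp_apply, hψ] using t_mul_of (φ := φ) ⟨f a, a.2⟩

@[simp]
theorem map_of (h : H) : map f ψ hψ (of h) = of (f h) :=
  lift_of _ _ _ h

@[simp]
theorem map_t : map f ψ hψ t = t :=
  lift_t _ _ _

theorem NormalWord.ReducedWord.prod_map (w : ReducedWord H (A.comap f) (B.comap f)) :
    (w.map f).prod φ = HNNExtension.map f ψ hψ (w.prod ψ) := by
  simp [ReducedWord.prod, ReducedWord.map, map_list_prod, Function.comp_def, map_zpow]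

/-- Britton's lemma, applied to the image of a reduced word, which is again reduced. -/
theorem map_mem_range_of_iff {x : HNNExtension H (A.comap f) (B.comap f) ψ} :
    map f ψ hψ x ∈ (of : G →* HNNExtension G A B φ).range ↔
      x ∈ (of : H →* HNNExtension H (A.comap f) (B.comap f) ψ).range := by
  refine ⟨fun hx => ?_, fun ⟨h, hx⟩ => ⟨f h, by rw [← hx, map_of]⟩⟩
  obtain ⟨w, rfl⟩ := ReducedWord.exists_prod_eq x
  have hnil : (w.map f).toList = [] :=
    ReducedWord.toList_eq_nil_of_mem_of_range φ _ (by rwa [ReducedWord.prod_map f ψ hψ])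
  replace hnil : w.toList = [] := List.map_eq_nil_iff.mp hnil
  exact ⟨w.head, by simp [ReducedWord.prod, hnil]⟩

theorem map_injective (hf : Function.Injective f) : Function.Injective (map f ψ hψ) := by
  refine (injective_iff_map_eq_one _).mpr fun x hx => ?_
  obtain ⟨h, rfl⟩ := (map_mem_range_of_iff f ψ hψ).mp (hx ▸ one_mem _)
  rw [map_of] at hx
  have hfh : f h = 1 := of_injective (φ := φ) (hx.trans (map_one of).symm)
  rw [hf (hfh.trans (map_one f).symm), map_one]

theorem range_map :
    (map f ψ hψ).range = f.range.map of ⊔ Subgroup.closure {(t : HNNExtension G A B φ)} := by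
  apply le_antisymm
  · rintro _ ⟨x, rfl⟩
    induction x using induction_on with
    | of h => exact Subgroup.mem_sup_left ⟨f h, ⟨h, rfl⟩, (map_of f ψ hψ h).symm⟩
    | t => exact Subgroup.mem_sup_right (by rw [map_t]; exact Subgroup.subset_closure rfl)
    | mul x y hx hy => rw [map_mul]; exact mul_mem hx hy
    | inv x hx => rw [map_inv]; exact inv_mem hx
  · refine sup_le ?_ ((Subgroup.closure_le _).mpr ?_)
    · rintro _ ⟨_, ⟨h, rfl⟩, rfl⟩
      exact ⟨of h, map_of f ψ hψ h⟩
    · rintro _ rfl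
      exact ⟨t, map_t f ψ hψ⟩

theorem comap_of_range_map : (map f ψ hψ).range.comap of = f.range := by
  ext g
  refine ⟨fun ⟨x, hx⟩ => ?_, fun ⟨h, hh⟩ => ⟨of h, by rw [map_of, hh]⟩⟩
  obtain ⟨h, rfl⟩ := (map_mem_range_of_iff f ψ hψ).mp ⟨g, hx.symm⟩
  exact ⟨h, of_injective (φ := φ) ((map_of f ψ hψ h).symm.trans hx)⟩

end HNNExtension

namespace Stmt10

open HNNExtension

theorem subgroups_in_HNN_extension_general
    {G : Type*} [Group G] (A B : Subgroup G) (φ : ↥A ≃* ↥B) (G' : Subgroup G)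
    -- `ψ` is the restriction of `φ` to `A' = G' ∩ A`, an isomorphism onto `B' = G' ∩ B`:
    (ψ : ↥(A.comap G'.subtype) ≃* ↥(B.comap G'.subtype))
    (hψ : ∀ x : ↥(A.comap G'.subtype),
      ((ψ x : ↥G') : G) = ((φ ⟨((x : ↥G') : G), x.2⟩ : ↥B) : G)) :
    ∀ Γ' : Subgroup (HNNExtension G A B φ),
      Γ' = (G'.map (of : G →* HNNExtension G A B φ)) ⊔
           Subgroup.closure {(t : HNNExtension G A B φ)} →
      -- (1) `Γ' = G' *_ψ t`:
      (∃ e : HNNExtension ↥G' (A.comap G'.subtype) (B.comap G'.subtype) ψ →*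
          HNNExtension G A B φ,
        Function.Injective e ∧ e.range = Γ' ∧
        (∀ g : ↥G', e (of g) = of (g : G)) ∧ e t = t) ∧
      -- (2) `Γ' ∩ G = G'`:
      Γ'.comap (of : G →* HNNExtension G A B φ) = G' ∧
      -- (3) `Γ' ∩ A = G' ∩ A` and `Γ' ∩ B = G' ∩ B`:
      (∀ a : ↥A, of (a : G) ∈ Γ' ↔ (a : G) ∈ G') ∧
      (∀ b : ↥B, of (b : G) ∈ Γ' ↔ (b : G) ∈ G') := by
  rintro Γ' rfl
  have hrange := range_map G'.subtype ψ hψ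
  rw [Subgroup.range_subtype] at hrange
  have hcomap := comap_of_range_map G'.subtype ψ hψ
  rw [hrange, Subgroup.range_subtype] at hcomap
  refine ⟨⟨map G'.subtype ψ hψ, map_injective _ ψ hψ G'.subtype_injective, hrange,
    map_of _ ψ hψ, map_t _ ψ hψ⟩, hcomap, fun a => SetLike.ext_iff.mp hcomap a.1,
    fun b => SetLike.ext_iff.mp hcomap b.1⟩

/-- Lemma on subgroups of an HNN-extension `Γ = G *_φ t` with respect to an
isomorphism `φ : A ≃* B` of subgroups `A, B ≤ G`: if `G' ≤ G` satisfies
`φ(G' ∩ A) = G' ∩ B`, then `Γ' = ⟨G', t⟩` is the HNN-extension of `G'` by `t`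
with respect to the restriction `ψ` of `φ` to `G' ∩ A` (there is an injective
homomorphism from that HNN-extension onto `Γ'` compatible with the inclusions
and sending stable letter to stable letter); moreover `Γ' ∩ G = G'`,
`Γ' ∩ A = G' ∩ A` and `Γ' ∩ B = G' ∩ B`. -/
theorem subgroups_in_HNN_extension
    {G : Type*} [Group G] (A B : Subgroup G) (φ : ↥A ≃* ↥B) (G' : Subgroup G)
    -- `φ(G' ∩ A) = G' ∩ B`:
    (hG' : ∀ a : ↥A, (a : G) ∈ G' ↔ ((φ a : ↥B) : G) ∈ G')
    -- `ψ` is the restriction of `φ` to `A' = G' ∩ A`, an isomorphism onto `B' = G' ∩ B`: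
    (ψ : ↥(A.comap G'.subtype) ≃* ↥(B.comap G'.subtype))
    (hψ : ∀ x : ↥(A.comap G'.subtype),
      ((ψ x : ↥G') : G) = ((φ ⟨((x : ↥G') : G), x.2⟩ : ↥B) : G)) :
    ∀ Γ' : Subgroup (HNNExtension G A B φ),
      Γ' = (G'.map (of : G →* HNNExtension G A B φ)) ⊔
           Subgroup.closure {(t : HNNExtension G A B φ)} →
      -- (1) `Γ' = G' *_ψ t`:
      (∃ e : HNNExtension ↥G' (A.comap G'.subtype) (B.comap G'.subtype) ψ →*
          HNNExtension G A B φ,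
        Function.Injective e ∧ e.range = Γ' ∧
        (∀ g : ↥G', e (of g) = of (g : G)) ∧ e t = t) ∧
      -- (2) `Γ' ∩ G = G'`:
      Γ'.comap (of : G →* HNNExtension G A B φ) = G' ∧
      -- (3) `Γ' ∩ A = G' ∩ A` and `Γ' ∩ B = G' ∩ B`:
      (∀ a : ↥A, of (a : G) ∈ Γ' ↔ (a : G) ∈ G') ∧
      (∀ b : ↥B, of (b : G) ∈ Γ' ↔ (b : G) ∈ G') :=
  subgroups_in_HNN_extension_general A B φ G' ψ hψ

end Stmt10
end

section
/- Let G be a finitely generated group and H, H' two benign subgroups of G. Then H ∩ H' is a benign subgroup of G. -/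
/-!
If `G` embeds in finitely presented groups `K ⊇ L` and `K' ⊇ L'` with `G ∩ L = H` and
`G ∩ L' = H'`, then the diagonal embedding of `G` into `K × K'` meets the finitely generated
subgroup `L × L'` in `H ∩ H'`. It remains that `K × K'` is finitely presented: it is the free
product `K ∗ K'` modulo the finitely many commutators of a generator of `K` with one of `K'`,
because once those commute, the images of `K` and `K'` in the quotient commute elementwise.
-/

namespace Stmt12


/-- A group is finitely presented if it is isomorphic to a presented group with
finitely many generators and finitely many relators. -/
def FinitelyPresentedGroup (K : Type*) [Group K] : Prop :=
  ∃ (n : ℕ) (rels : Set (FreeGroup (Fin n))), rels.Finite ∧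
    Nonempty (K ≃* PresentedGroup rels)

/-- A subgroup `H` of a group `G` is benign in `G` if `G` embeds into some finitely
presented group `K` possessing a finitely generated subgroup `L` such that
`G ∩ L = H` (i.e. the preimage of `L` under the embedding is `H`). -/
def Benign {G : Type*} [Group G] (H : Subgroup G) : Prop :=
  ∃ (K : Type) (_ : Group K) (φ : G →* K) (L : Subgroup K),
    Function.Injective φ ∧ FinitelyPresentedGroup K ∧ L.FG ∧ L.comap φ = H

end Stmt12

open scoped commutatorElement

theorem MonoidHom.commute_of_closure_eq_top {G H P : Type*} [Group G] [Group H] [Group P]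
    (f : G →* P) (g : H →* P) {S : Set G} {T : Set H}
    (hS : Subgroup.closure S = ⊤) (hT : Subgroup.closure T = ⊤)
    (hST : ∀ s ∈ S, ∀ t ∈ T, Commute (f s) (g t)) (x : G) (y : H) :
    Commute (f x) (g y) := by
  have hrange : f.range ≤ Subgroup.centralizer g.range := by
    rw [f.range_eq_map, g.range_eq_map, ← hS, ← hT, MonoidHom.map_closure, MonoidHom.map_closure,
      Subgroup.centralizer_closure, Subgroup.closure_le]
    rintro _ ⟨s, hs, rfl⟩ _ ⟨t, ht, rfl⟩
    exact (hST s hs t ht).symm.eq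
  exact (hrange ⟨x, rfl⟩ (g y) ⟨y, rfl⟩).symm

namespace Monoid.Coprod

theorem ker_toProd_eq_normalClosure {G H : Type*} [Group G] [Group H] {S : Set G} {T : Set H}
    (hS : Subgroup.closure S = ⊤) (hT : Subgroup.closure T = ⊤) :
    (toProd : G ∗ H →* G × H).ker =
      Subgroup.normalClosure (Set.image2 (fun s t => ⁅(inl s : G ∗ H), (inr t : G ∗ H)⁆) S T) := by
  set N := Subgroup.normalClosure (Set.image2 (fun s t => ⁅(inl s : G ∗ H), (inr t : G ∗ H)⁆) S T)
  set π := QuotientGroup.mk' N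
  have hcomm : ∀ x y, Commute ((π.comp inl) x) ((π.comp inr) y) := by
    refine (π.comp inl).commute_of_closure_eq_top (π.comp inr) hS hT fun s hs t ht => ?_
    rw [← commutatorElement_eq_one_iff_commute, MonoidHom.comp_apply, MonoidHom.comp_apply,
      ← map_commutatorElement, QuotientGroup.mk'_apply, QuotientGroup.eq_one_iff]
    exact Subgroup.subset_normalClosure ⟨s, hs, t, ht, rfl⟩
  set ψ := (π.comp inl).noncommCoprod (π.comp inr) hcomm
  have hψ : ψ.comp toProd = π := hom_ext (by ext; simp [ψ]) (by ext; simp [ψ])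
  refine le_antisymm (fun x hx => ?_) (Subgroup.normalClosure_le_normal ?_)
  · have hπx : π x = 1 := by rw [← hψ, MonoidHom.comp_apply, hx, map_one]
    exact (QuotientGroup.eq_one_iff x).1 hπx
  · rintro _ ⟨s, -, t, -, rfl⟩
    rw [SetLike.mem_coe, MonoidHom.mem_ker, map_commutatorElement, toProd_apply_inl,
      toProd_apply_inr, commutatorElement_eq_one_iff_commute]
    exact (Commute.one_right s).prod (Commute.one_left t)

end Monoid.Coprod

theorem Group.IsFinitelyPresented.fg {G : Type*} [Group G] [h : Group.IsFinitelyPresented G] :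
    Group.FG G :=
  let ⟨n, φ, hφ, _⟩ := h.out
  Group.fg_iff_exists_freeGroup_hom_surjective_finite.2 ⟨Fin n, inferInstance, φ, hφ⟩

instance Group.IsFinitelyPresented.prod {G H : Type*} [Group G] [Group H]
    [Group.IsFinitelyPresented G] [Group.IsFinitelyPresented H] :
    Group.IsFinitelyPresented (G × H) := by
  obtain ⟨S, hS, hSfin⟩ := Group.fg_iff.1 (Group.IsFinitelyPresented.fg (G := G))
  obtain ⟨T, hT, hTfin⟩ := Group.fg_iff.1 (Group.IsFinitelyPresented.fg (G := H))
  refine .of_surjective Monoid.Coprod.toProd Monoid.Coprod.toProd_surjective ?_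
  rw [Monoid.Coprod.ker_toProd_eq_normalClosure hS hT]
  exact ⟨_, hSfin.image2 _ hTfin, rfl⟩

namespace Stmt12

theorem finitelyPresentedGroup_iff_isFinitelyPresented {K : Type*} [Group K] :
    FinitelyPresentedGroup K ↔ Group.IsFinitelyPresented K := by
  refine ⟨fun ⟨_, rels, hrels, ⟨e⟩⟩ => ?_, fun _ =>
    Group.IsFinitelyPresented.exists_mulEquiv_presentedGroup⟩
  have : Finite rels := hrels
  exact .equiv e.symm

theorem benign_inf_general {G : Type*} [Group G] (H H' : Subgroup G)
    (hH : Benign H) (hH' : Benign H') : Benign (H ⊓ H') := by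
  obtain ⟨K, _, φ, L, hφ, hK, hL, rfl⟩ := hH
  obtain ⟨K', _, φ', L', -, hK', hL', rfl⟩ := hH'
  rw [finitelyPresentedGroup_iff_isFinitelyPresented] at hK hK'
  refine ⟨K × K', inferInstance, φ.prod φ', L.prod L', fun x y hxy => hφ congr(($hxy).1),
    finitelyPresentedGroup_iff_isFinitelyPresented.2 inferInstance, hL.prod hL', ?_⟩
  ext
  simp only [Subgroup.mem_comap, MonoidHom.prod_apply, Subgroup.mem_prod, Subgroup.mem_inf]

/-- If `H` and `H'` are benign subgroups of a finitely generated group `G`, then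
`H ∩ H'` is benign in `G`. -/
theorem benign_inf {G : Type*} [Group G] [Group.FG G] (H H' : Subgroup G)
    (hH : Benign H) (hH' : Benign H') : Benign (H ⊓ H') :=
  benign_inf_general H H' hH hH'

end Stmt12
end

section
/- Let G₀ = ⟨b, c⟩ be a free group of rank 2, and for i ∈ ℤ let b_i = c^{-i} b c^i. Let φ be the injective endomorphism of G₀ sending b ↦ c^{-1} b c and c ↦ c, and let Γ = G₀ *_φ t be the corresponding HNN-extension. Then G₀ ∩ ⟨b, t⟩ = ⟨b_i : i ∈ ℤ⟩ in Γ. In particular, the subgroup ⟨b_i : i ∈ ℤ⟩ is benign in G₀. -/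
/-!
Conjugation by `t` acts on `G₀` as `φ`, so it shifts `b_i ↦ b_{i+1}`. Hence `B = ⟨b_i : i ∈ ℤ⟩`
is normalised by `t` and `⟨b, t⟩ = B ⊔ ⟨t⟩ = B · ⟨t⟩`. An element `z t^n` with `z ∈ B` lies in
`G₀` only if `n = 0`, as the homomorphism `Γ → ℤ` killing `G₀` and sending `t ↦ 1` shows; so
`G₀ ∩ ⟨b, t⟩ = B`. Benignity follows since `⟨b, t⟩` is finitely generated and `Γ` has the
finite presentation `⟨b, c, t | t b t⁻¹ = c⁻¹ b c, t c t⁻¹ = c⟩`.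
-/

namespace Stmt16

/-- A group is finitely presented if it is isomorphic to a presented group with
finitely many generators and finitely many relators. -/
def FinitelyPresentedGroup (K : Type*) [Group K] : Prop :=
  ∃ (n : ℕ) (rels : Set (FreeGroup (Fin n))), rels.Finite ∧
    Nonempty (K ≃* PresentedGroup rels)

/-- A subgroup `H` of a group `G` is benign in `G` if `G` embeds into some finitely
presented group `K` possessing a finitely generated subgroup `L` such that
`G ∩ L = H`. -/
def Benign {G : Type*} [Group G] (H : Subgroup G) : Prop :=
  ∃ (K : Type) (_ : Group K) (φ : G →* K) (L : Subgroup K),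
    Function.Injective φ ∧ FinitelyPresentedGroup K ∧ L.FG ∧ L.comap φ = H

/-- `G₀` is the free group of rank 2 on `b`, `c`. -/
abbrev G0 := FreeGroup (Fin 2)

def b : G0 := FreeGroup.of 0
def c : G0 := FreeGroup.of 1

/-- `b_i = c^{-i} b c^i`. -/
def bi (i : ℤ) : G0 := c ^ (-i) * b * c ^ i

/-- The monomorphism `φ : G₀ → G₀` with `φ(b) = b^c` and `φ(c) = c`. -/
def φm : G0 →* G0 := FreeGroup.lift ![c⁻¹ * b * c, c]

end Stmt16

open Subgroup

section ConjugationShift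

variable {G : Type*} [Group G] {y : ℤ → G} {t : G}

theorem zpow_mul_mul_zpow_neg_of_mul_mul_inv_eq_succ (h : ∀ i, t * y i * t⁻¹ = y (i + 1))
    (n i : ℤ) : t ^ n * y i * t ^ (-n) = y (i + n) := by
  induction n using Int.induction_on generalizing i with
  | zero => simp
  | succ n ih =>
    rw [← add_assoc, ← h, ← ih]
    group
  | pred n ih =>
    have h' : y (i + -n - 1) = t⁻¹ * y (i + -n) * t := by
      have := h (i + -n - 1)
      rw [sub_add_cancel] at this
      rw [← this]
      group
    rw [← add_sub_assoc, h', ← ih]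
    group

theorem zpowers_le_normalizer_closure_range (h : ∀ i, t * y i * t⁻¹ = y (i + 1)) :
    zpowers t ≤ normalizer (closure (Set.range y) : Set G) := by
  rw [le_normalizer_closure_iff]
  rintro _ ⟨n, rfl⟩ _ ⟨i, rfl⟩
  rw [← zpow_neg, zpow_mul_mul_zpow_neg_of_mul_mul_inv_eq_succ h]
  exact subset_closure ⟨i + n, rfl⟩

theorem closure_pair_eq_closure_range_sup_zpowers (h : ∀ i, t * y i * t⁻¹ = y (i + 1)) :
    closure {y 0, t} = closure (Set.range y) ⊔ zpowers t := by
  apply le_antisymm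
  · rw [closure_le, Set.insert_subset_iff, Set.singleton_subset_iff]
    exact ⟨mem_sup_left (subset_closure ⟨0, rfl⟩), mem_sup_right (mem_zpowers t)⟩
  · have ht : t ∈ closure {y 0, t} := subset_closure (Set.mem_insert_of_mem _ rfl)
    refine sup_le (closure_le _ |>.mpr ?_) (zpowers_le.mpr ht)
    rintro _ ⟨i, rfl⟩
    rw [← zero_add i, ← zpow_mul_mul_zpow_neg_of_mul_mul_inv_eq_succ h]
    exact mul_mem (mul_mem (zpow_mem ht i) (subset_closure (Set.mem_insert _ _)))
      (zpow_mem ht (-i))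

end ConjugationShift

theorem Subgroup.sup_inf_assoc_of_le_of_le_normalizer {G : Type*} [Group G]
    {N H K : Subgroup G} (hNK : N ≤ K) (hH : H ≤ normalizer (N : Set G)) :
    (N ⊔ H) ⊓ K = N ⊔ H ⊓ K := by
  apply SetLike.coe_injective
  rw [coe_inf, coe_mul_of_right_le_normalizer_left _ _ hH,
    coe_mul_of_right_le_normalizer_left _ _ (inf_le_left.trans hH), mul_inf_assoc _ _ _ hNK]

namespace HNNExtension

variable {G : Type*} [Group G] {A B : Subgroup G} {φ : A ≃* B}

theorem range_of_inf_zpowers_t :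
    (of : G →* HNNExtension G A B φ).range ⊓ zpowers t = ⊥ := by
  let χ : HNNExtension G A B φ →* Multiplicative ℤ := lift 1 (.ofAdd 1) (by simp)
  rw [eq_bot_iff]
  rintro _ ⟨⟨g, rfl⟩, n, hn⟩
  have hχ : χ (t ^ n) = χ (of g) := congrArg χ hn
  simp only [χ, map_zpow, lift_t, lift_of, MonoidHom.one_apply] at hχ
  rw [← ofAdd_zsmul, smul_eq_mul, mul_one, ofAdd_eq_one] at hχ
  subst hχ
  simpa using hn.symm

theorem comap_of_closure_pair_eq {x : ℤ → G}
    (h : ∀ i, (t : HNNExtension G A B φ) * of (x i) * t⁻¹ = of (x (i + 1))) :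
    (closure {of (x 0), (t : HNNExtension G A B φ)}).comap of = closure (Set.range x) := by
  have hN : closure (Set.range (of ∘ x)) = (closure (Set.range x)).map
      (of : G →* HNNExtension G A B φ) := by
    rw [MonoidHom.map_closure, Set.range_comp]
  have hsup := closure_pair_eq_closure_range_sup_zpowers (y := of ∘ x) h
  have hcomap (K : Subgroup (HNNExtension G A B φ)) : K.comap of = (K ⊓ of.range).comap of := by
    rw [comap_inf, MonoidHom.comap_range_self, inf_top_eq]
  rw [Function.comp_apply] at hsup
  rw [hsup, hcomap, sup_inf_assoc_of_le_of_le_normalizer, inf_comm, range_of_inf_zpowers_t,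
    sup_bot_eq, hN, comap_map_eq_self_of_injective (of_injective φ)]
  · rw [hN]; exact map_le_range _ _
  · exact zpowers_le_normalizer_closure_range h

end HNNExtension

namespace Stmt16

open Subgroup HNNExtension

theorem bi_zero : bi 0 = b := by simp [bi]

theorem φm_b : φm b = c⁻¹ * b * c := FreeGroup.lift_apply_of ..

theorem φm_c : φm c = c := FreeGroup.lift_apply_of ..

theorem φm_bi (i : ℤ) : φm (bi i) = bi (i + 1) := by
  simp only [bi, map_mul, map_zpow, φm_b, φm_c]
  group

/-- The relators of `⟨b, c, t | t b t⁻¹ = c⁻¹ b c, t c t⁻¹ = c⟩`, with generators numbered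
`b, c, t`. -/
def hnnRelators : Set (FreeGroup (Fin 3)) :=
  {.of 2 * .of 0 * (.of 2)⁻¹ * ((.of 1)⁻¹ * .of 0 * .of 1)⁻¹,
    .of 2 * .of 1 * (.of 2)⁻¹ * (.of 1)⁻¹}

abbrev HNNPresented := PresentedGroup hnnRelators

def g0ToPresented : G0 →* HNNPresented := FreeGroup.lift ![.of 0, .of 1]

theorem of_two_mul_g0ToPresented_mul_inv (g : G0) :
    .of 2 * g0ToPresented g * (.of 2)⁻¹ = g0ToPresented (φm g) := by
  suffices (MulAut.conj (.of 2 : HNNPresented)).toMonoidHom.comp g0ToPresented =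
      g0ToPresented.comp φm from DFunLike.congr_fun this g
  refine FreeGroup.ext_hom _ _ fun a => ?_
  fin_cases a
  · exact PresentedGroup.mk_eq_mk_of_mul_inv_mem (Set.mem_insert _ _)
  · exact PresentedGroup.mk_eq_mk_of_mul_inv_mem (Set.mem_insert_of_mem _ rfl)

section

variable {ψ : (⊤ : Subgroup G0) ≃* φm.range}
    (hψ : ∀ x : (⊤ : Subgroup G0), ((ψ x : ↥φm.range) : G0) = φm (x : G0))
include hψ

theorem t_mul_of_mul_t_inv (g : G0) :
    (t : HNNExtension G0 ⊤ φm.range ψ) * of g * t⁻¹ = of (φm g) := by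
  have h := equiv_eq_conj (φ := ψ) ⟨g, mem_top g⟩
  rw [hψ] at h
  exact h.symm

def hnnToPresented : HNNExtension G0 ⊤ φm.range ψ →* HNNPresented :=
  lift g0ToPresented (.of 2 : HNNPresented) fun a => by
    rw [hψ, ← of_two_mul_g0ToPresented_mul_inv, inv_mul_cancel_right]

def presentedToHNN : HNNPresented →* HNNExtension G0 ⊤ φm.range ψ :=
  PresentedGroup.toGroup (f := ![of b, of c, t]) <| by
    rintro r (rfl | rfl) <;> simp only [map_mul, map_inv, mul_inv_eq_one, FreeGroup.lift_apply_of]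
    · exact (t_mul_of_mul_t_inv hψ b).trans (by rw [φm_b, map_mul, map_mul, map_inv]; rfl)
    · exact (t_mul_of_mul_t_inv hψ c).trans (by rw [φm_c]; rfl)

def hnnEquivPresented : HNNExtension G0 ⊤ φm.range ψ ≃* HNNPresented :=
  MonoidHom.toMulEquiv (hnnToPresented hψ) (presentedToHNN hψ)
    (by
      ext a
      · fin_cases a <;> simp [hnnToPresented, presentedToHNN, g0ToPresented, b, c]
      · simp [hnnToPresented, presentedToHNN])
    (by
      ext a
      fin_cases a <;> simp [hnnToPresented, presentedToHNN, g0ToPresented, b, c])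

theorem finitelyPresentedGroup_hnnExtension :
    FinitelyPresentedGroup (HNNExtension G0 ⊤ φm.range ψ) :=
  ⟨3, hnnRelators, (Set.finite_singleton _).insert _, ⟨hnnEquivPresented hψ⟩⟩

end

/-- In the HNN-extension `Γ = G₀ *_φ t` of `G₀` with respect to `φ`
(regarded as an isomorphism `ψ` from `G₀ = ⊤` onto its image), we have
`G₀ ∩ ⟨b, t⟩ = ⟨b_i : i ∈ ℤ⟩`; in particular `⟨b_i : i ∈ ℤ⟩` is benign in `G₀`. -/
theorem benign_conjugates (ψ : (⊤ : Subgroup G0) ≃* φm.range)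
    (hψ : ∀ x : (⊤ : Subgroup G0), ((ψ x : ↥φm.range) : G0) = φm (x : G0)) :
    (Subgroup.closure
        {HNNExtension.of b, (HNNExtension.t : HNNExtension G0 ⊤ φm.range ψ)}).comap
      (HNNExtension.of : G0 →* HNNExtension G0 ⊤ φm.range ψ)
      = Subgroup.closure (Set.range bi) ∧
    Benign (Subgroup.closure (Set.range bi)) := by
  have hcomap : (closure {of b, (t : HNNExtension G0 ⊤ φm.range ψ)}).comap of =
      closure (Set.range bi) := by
    have h := comap_of_closure_pair_eq (φ := ψ) (x := bi) fun i => by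
      rw [t_mul_of_mul_t_inv hψ, φm_bi]
    rwa [bi_zero] at h
  refine ⟨hcomap, HNNExtension G0 ⊤ φm.range ψ, inferInstance, of, closure {of b, t},
    of_injective ψ, finitelyPresentedGroup_hnnExtension hψ, ?_, hcomap⟩
  exact (fg_iff _).2 ⟨_, rfl, (Set.finite_singleton _).insert _⟩

end Stmt16
end
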